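/- Fix 0 ≤ t ≤ u ≤ T and let φ : L^p(𝓕_u) → L^0(𝓕_t) be (i) monotone decreasing: X ≤ Y a.s. implies φ(Y) ≤ φ(X) a.s., and (ii) 𝓕_t-cash additive: φ(X + m) = φ(X) − m a.s. for every X ∈ L^p(𝓕_u) and every 𝓕_t-measurable m ∈ L^p(𝓕_t). Let D be an 𝓕_u-measurable random variable with 0 < D ≤ 1 a.s. Then the map ρ(X) = φ(D·X) (well-defined on L^p(𝓕_u) since |D| ≤ 1) is cash subadditive: for every X ∈ L^p(𝓕_u) and every 𝓕_t-measurable m ∈ L^p(𝓕_t) with m ≥ 0 a.s., ρ(X + m) ≥ ρ(X) − m a.s. -/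

import Mathlib

/-!
Since `0 < D ≤ 1` and `m ≥ 0`, we have `D (X + m) ≤ D X + m`. Monotonicity and cash additivity
of `φ` then give `φ (D (X + m)) ≥ φ (D X + m) = φ (D X) - m`.
-/

open MeasureTheory Real
open scoped ENNReal

/-- `f` belongs to `L^p(m)`: it is in `L^p` and strongly measurable with respect
to the sub-σ-algebra `m`. -/
def LpMeas' {Ω : Type*} {m0 : MeasurableSpace Ω} (P : Measure Ω) (p : ℝ≥0∞)
    (m : MeasurableSpace Ω) (f : Ω → ℝ) : Prop :=
  MemLp f p P ∧ StronglyMeasurable[m] f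

namespace LpMeas'

variable {Ω : Type*} {m0 : MeasurableSpace Ω} {P : Measure Ω} {p : ℝ≥0∞}
  {m m' : MeasurableSpace Ω} {f g D : Ω → ℝ}

theorem mono (hmm' : m ≤ m') (hf : LpMeas' P p m f) : LpMeas' P p m' f :=
  ⟨hf.1, hf.2.mono hmm'⟩

theorem add (hf : LpMeas' P p m f) (hg : LpMeas' P p m g) :
    LpMeas' P p m (fun ω => f ω + g ω) :=
  ⟨hf.1.add hg.1, hf.2.add hg.2⟩

theorem mul_of_abs_le_one (hm : m ≤ m0) (hD_meas : StronglyMeasurable[m] D)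
    (hD : ∀ᵐ ω ∂P, |D ω| ≤ 1) (hf : LpMeas' P p m f) :
    LpMeas' P p m (fun ω => D ω * f ω) := by
  have hDf : StronglyMeasurable[m] (fun ω => D ω * f ω) := hD_meas.mul hf.2
  refine ⟨hf.1.of_le (hDf.mono hm).aestronglyMeasurable ?_, hDf⟩
  filter_upwards [hD] with ω hω
  rw [norm_mul, Real.norm_eq_abs (D ω)]
  exact mul_le_of_le_one_left (norm_nonneg _) hω

end LpMeas'

theorem sub_le_of_ae_le_add {Ω : Type*} {m0 : MeasurableSpace Ω} {P : Measure Ω} {p : ℝ≥0∞}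
    {𝒢 ℋ : MeasurableSpace Ω} (h𝒢ℋ : 𝒢 ≤ ℋ) {φ : (Ω → ℝ) → (Ω → ℝ)}
    (hφ_mono : ∀ X Y : Ω → ℝ, LpMeas' P p ℋ X → LpMeas' P p ℋ Y →
      (∀ᵐ ω ∂P, X ω ≤ Y ω) → (∀ᵐ ω ∂P, φ Y ω ≤ φ X ω))
    (hφ_ca : ∀ X : Ω → ℝ, LpMeas' P p ℋ X →
      ∀ m : Ω → ℝ, LpMeas' P p 𝒢 m →
        (∀ᵐ ω ∂P, φ (fun ω' => X ω' + m ω') ω = φ X ω - m ω))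
    {X Y m : Ω → ℝ} (hX : LpMeas' P p ℋ X) (hY : LpMeas' P p ℋ Y) (hm : LpMeas' P p 𝒢 m)
    (hYX : ∀ᵐ ω ∂P, Y ω ≤ X ω + m ω) :
    ∀ᵐ ω ∂P, φ X ω - m ω ≤ φ Y ω := by
  filter_upwards [hφ_mono _ _ hY (hX.add (hm.mono h𝒢ℋ)) hYX, hφ_ca X hX m hm] with ω hle hcash
  exact hcash ▸ hle

theorem discounted_cash_additive_is_cash_subadditive_general
    {Ω : Type*} {m0 : MeasurableSpace Ω} (P : Measure Ω)
    (ℱ : Filtration ℝ m0) (p : ℝ≥0∞)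
    (t u : ℝ) (htu : t ≤ u)
    (φ : (Ω → ℝ) → (Ω → ℝ))
    (hφ_mono : ∀ X Y : Ω → ℝ, LpMeas' P p (ℱ u) X → LpMeas' P p (ℱ u) Y →
      (∀ᵐ ω ∂P, X ω ≤ Y ω) → (∀ᵐ ω ∂P, φ Y ω ≤ φ X ω))
    (hφ_ca : ∀ X : Ω → ℝ, LpMeas' P p (ℱ u) X →
      ∀ m : Ω → ℝ, LpMeas' P p (ℱ t) m →
        (∀ᵐ ω ∂P, φ (fun ω' => X ω' + m ω') ω = φ X ω - m ω))
    (D : Ω → ℝ) (hD_meas : StronglyMeasurable[ℱ u] D)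
    (hD_pos : ∀ᵐ ω ∂P, 0 < D ω) (hD_le : ∀ᵐ ω ∂P, D ω ≤ 1) :
    ∀ X : Ω → ℝ, LpMeas' P p (ℱ u) X →
      ∀ m : Ω → ℝ, LpMeas' P p (ℱ t) m → (∀ᵐ ω ∂P, 0 ≤ m ω) →
        ∀ᵐ ω ∂P,
          φ (fun ω' => D ω' * X ω') ω - m ω
            ≤ φ (fun ω' => D ω' * (X ω' + m ω')) ω := by
  intro X hX m hm hm_nonneg
  have hD_abs : ∀ᵐ ω ∂P, |D ω| ≤ 1 := by
    filter_upwards [hD_pos, hD_le] with ω hpos hle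
    rwa [abs_of_pos hpos]
  have hdiscount : ∀ᵐ ω ∂P, D ω * (X ω + m ω) ≤ D ω * X ω + m ω := by
    filter_upwards [hD_le, hm_nonneg] with ω hle hm_ω
    rw [mul_add]
    gcongr
    exact mul_le_of_le_one_left hm_ω hle
  have hdiscounted {f : Ω → ℝ} (hf : LpMeas' P p (ℱ u) f) :
      LpMeas' P p (ℱ u) (fun ω => D ω * f ω) :=
    hf.mul_of_abs_le_one (ℱ.le u) hD_meas hD_abs
  exact sub_le_of_ae_le_add (ℱ.mono htu) hφ_mono hφ_ca (hdiscounted hX)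
    (hdiscounted (hX.add (hm.mono (ℱ.mono htu)))) hm hdiscount

/-- Discounting a monotone (decreasing), `𝓕_t`-cash additive evaluation `φ` by a
discount factor `0 < D ≤ 1` produces a cash subadditive risk measure:
`ρ(X) = φ(D·X)` satisfies `ρ(X + m) ≥ ρ(X) - m` a.s. for every nonnegative
`𝓕_t`-measurable `m`. -/
theorem discounted_cash_additive_is_cash_subadditive
    {Ω : Type*} {m0 : MeasurableSpace Ω} (P : Measure Ω) [IsProbabilityMeasure P]
    (T : ℝ) (ℱ : Filtration ℝ m0) (p : ℝ≥0∞)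
    (t u : ℝ) (h0t : 0 ≤ t) (htu : t ≤ u) (huT : u ≤ T)
    (φ : (Ω → ℝ) → (Ω → ℝ))
    (hφ_mono : ∀ X Y : Ω → ℝ, LpMeas' P p (ℱ u) X → LpMeas' P p (ℱ u) Y →
      (∀ᵐ ω ∂P, X ω ≤ Y ω) → (∀ᵐ ω ∂P, φ Y ω ≤ φ X ω))
    (hφ_ca : ∀ X : Ω → ℝ, LpMeas' P p (ℱ u) X →
      ∀ m : Ω → ℝ, LpMeas' P p (ℱ t) m →
        (∀ᵐ ω ∂P, φ (fun ω' => X ω' + m ω') ω = φ X ω - m ω))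
    (D : Ω → ℝ) (hD_meas : StronglyMeasurable[ℱ u] D)
    (hD_pos : ∀ᵐ ω ∂P, 0 < D ω) (hD_le : ∀ᵐ ω ∂P, D ω ≤ 1) :
    ∀ X : Ω → ℝ, LpMeas' P p (ℱ u) X →
      ∀ m : Ω → ℝ, LpMeas' P p (ℱ t) m → (∀ᵐ ω ∂P, 0 ≤ m ω) →
        ∀ᵐ ω ∂P,
          φ (fun ω' => D ω' * X ω') ω - m ω
            ≤ φ (fun ω' => D ω' * (X ω' + m ω')) ω :=
  discounted_cash_additive_is_cash_subadditive_general P ℱ p t u htu φ hφ_mono hφ_ca D hD_meas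
    hD_pos hD_le
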